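/- Simple regret for GP-UCB under a Matérn-type information-gain bound: assume k(x, x) ≤ 1 for all x ∈ X and that the Matérn-type information-gain hypothesis holds. Let f belong to the pre-RKHS of k with ‖f‖_k ≤ B for some B > 0, let x* ∈ X satisfy f(x*) = sup_{x ∈ X} f(x), and suppose the sequence (x_t)_{t≥1} follows the GP-UCB rule with parameter B. Then for every integer T ≥ T̄_Mat, the simple regret of the best queried point satisfies f(x*) − max_{t ∈ {1, …, T}} f(x_t) ≤ 2B · C̃_Mat^{1/2} · T^{−ν/d} · (ln T)^{ν/d}. -/

import Mathlib

/-!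
Cauchy–Schwarz in the pre-RKHS gives `|f(x) - μ(x; X_{t-1})| ≤ B σ(x; X_{t-1})`, so the UCB rule
yields `f(x*) - f(x_t) ≤ 2B σ(x_t; X_{t-1})` at every step. Expanding `det(I + λ⁻² K_T)` by Schur
complements writes the information gain of the queries as
`∑ₜ ½ ln(1 + σ²_{λ²}(x_t; X_{t-1}) / λ²)`, and `σ ≤ σ_{λ²}`. For `λ = λ_T` the Matérn hypothesis
bounds this sum by `T/6`, so some step has `σ(x_t; X_{t-1}) ≤ λ_T`; when `λ_T ≥ 1` the first step
already does, because `k ≤ 1`.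
-/

open Matrix

noncomputable section

/-- Gram matrix `K = [k(x_i, x_j)]` of the kernel `k` on the finite family `xs`. -/
def gram {X ι : Type*} [Fintype ι] (k : X → X → ℝ) (xs : ι → X) :
    Matrix ι ι ℝ := fun i j => k (xs i) (xs j)

/-- Kernel vector `k_t(x) = (k(x₁, x), …, k(x_t, x))`. -/
def kvec {X ι : Type*} [Fintype ι] (k : X → X → ℝ) (xs : ι → X) (x : X) :
    ι → ℝ := fun i => k (xs i) x

/-- Regularized posterior variance `σ²_{λ²}(x; xs) = k(x,x) - k_t(x)ᵀ (K + λ² I)⁻¹ k_t(x)`.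
For the empty family this is `k(x,x)`. -/
def postVar {X ι : Type*} [Fintype ι] [DecidableEq ι] (k : X → X → ℝ)
    (xs : ι → X) (lam : ℝ) (x : X) : ℝ :=
  k x x - kvec k xs x ⬝ᵥ ((gram k xs + lam ^ 2 • (1 : Matrix ι ι ℝ))⁻¹ *ᵥ kvec k xs x)

/-- Noise-free posterior standard deviation `σ(x; xs) = inf_{λ > 0} σ_{λ²}(x; xs)`. -/
def postStd {X ι : Type*} [Fintype ι] [DecidableEq ι] (k : X → X → ℝ)
    (xs : ι → X) (x : X) : ℝ :=
  ⨅ lam : {l : ℝ // 0 < l}, Real.sqrt (postVar k xs lam.1 x)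

/-- Maximum information gain `γ_T(λ²) = sup_{x₁,…,x_T} (1/2) ln det (I_T + λ⁻² K_T)`,
a value in `[0, ∞]`. -/
def mig {X : Type*} (k : X → X → ℝ) (T : ℕ) (lam : ℝ) : ENNReal :=
  ⨆ xs : Fin T → X, ENNReal.ofReal
    ((1 / 2) * Real.log ((1 + (lam ^ 2)⁻¹ • gram k xs).det))

/-- The prefix `X_{t-1} = (x₁, …, x_{t-1})` of a finite sequence (`t` is 0-indexed). -/
def pre {X : Type*} {T : ℕ} (xs : Fin T → X) (t : Fin T) : Fin t.1 → X :=
  fun i => xs ⟨i.1, i.2.trans t.2⟩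

/-- Noise-free posterior mean `μ(x; xs) = k_t(x)ᵀ K⁻¹ (f(x₁), …, f(x_t))ᵀ`
(for the empty family this is `0`). -/
def postMean {X ι : Type*} [Fintype ι] [DecidableEq ι] (k : X → X → ℝ)
    (xs : ι → X) (f : X → ℝ) (x : X) : ℝ :=
  kvec k xs x ⬝ᵥ ((gram k xs)⁻¹ *ᵥ fun i => f (xs i))

/-- Noise-free posterior standard deviation in closed form,
`σ(x; xs) = (k(x,x) - k_t(x)ᵀ K⁻¹ k_t(x))^{1/2}` (for the empty family, `k(x,x)^{1/2}`). -/
def postStdInv {X ι : Type*} [Fintype ι] [DecidableEq ι] (k : X → X → ℝ)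
    (xs : ι → X) (x : X) : ℝ :=
  Real.sqrt (k x x - kvec k xs x ⬝ᵥ ((gram k xs)⁻¹ *ᵥ kvec k xs x))

/-- The first `t` points `X_t = (x₁, …, x_t)` of an infinite sequence. -/
def prefN {X : Type*} (xseq : ℕ → X) (t : ℕ) : Fin t → X := fun i => xseq i

namespace Matrix

variable {ι : Type*} [Fintype ι] [DecidableEq ι]

/-- With `u = B⁻¹ v`: `vᵀA⁻¹v ≥ 2 uᵀv - uᵀAu ≥ 2 uᵀv - uᵀBu = vᵀB⁻¹v`. -/
theorem dotProduct_inv_mulVec_le_of_posSemidef_sub {A B : Matrix ι ι ℝ} (hA : A.PosSemidef)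
    (hBA : (B - A).PosSemidef) (hAu : IsUnit A.det) (hBu : IsUnit B.det) (v : ι → ℝ) :
    v ⬝ᵥ (B⁻¹ *ᵥ v) ≤ v ⬝ᵥ (A⁻¹ *ᵥ v) := by
  set u := B⁻¹ *ᵥ v
  have hBu' : B *ᵥ u = v := by rw [mulVec_mulVec, mul_nonsing_inv _ hBu, one_mulVec]
  have hAA : A *ᵥ (A⁻¹ *ᵥ v) = v := by rw [mulVec_mulVec, mul_nonsing_inv _ hAu, one_mulVec]
  have hAT : Aᵀ = A := by rw [← conjTranspose_eq_transpose_of_trivial, hA.isHermitian.eq]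
  have hsymm (p q : ι → ℝ) : p ⬝ᵥ (A *ᵥ q) = q ⬝ᵥ (A *ᵥ p) := by
    rw [dotProduct_mulVec, ← mulVec_transpose, hAT, dotProduct_comm]
  have h1 := hA.dotProduct_mulVec_nonneg (u - A⁻¹ *ᵥ v)
  have h2 := hBA.dotProduct_mulVec_nonneg u
  simp only [star_trivial, sub_mulVec, mulVec_sub, dotProduct_sub, sub_dotProduct, hBu', hAA]
    at h1 h2
  rw [hsymm (A⁻¹ *ᵥ v) u, hAA] at h1
  linarith [dotProduct_comm u v, dotProduct_comm (A⁻¹ *ᵥ v) v]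

theorem det_succ_eq_det_mul_schur {K : Type*} [Field K] {t : ℕ}
    (M : Matrix (Fin (t + 1)) (Fin (t + 1)) K)
    (hM : IsUnit (M.submatrix Fin.castSucc Fin.castSucc).det) :
    M.det = (M.submatrix Fin.castSucc Fin.castSucc).det *
      (M (Fin.last t) (Fin.last t) - (fun j => M (Fin.last t) j.castSucc) ⬝ᵥ
        ((M.submatrix Fin.castSucc Fin.castSucc)⁻¹ *ᵥ fun i => M i.castSucc (Fin.last t))) := by
  set A := M.submatrix Fin.castSucc Fin.castSucc
  let _ : Invertible A := A.invertibleOfIsUnitDet hM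
  have hblocks : M.submatrix finSumFinEquiv finSumFinEquiv = fromBlocks A
      (of fun i (_ : Fin 1) => M i.castSucc (Fin.last t))
      (of fun (_ : Fin 1) j => M (Fin.last t) j.castSucc)
      (of fun _ _ => M (Fin.last t) (Fin.last t)) := by
    ext (i | i) (j | j) <;>
      simp only [A, Fin.fin_one_eq_zero, submatrix_apply, finSumFinEquiv_apply_left,
        finSumFinEquiv_apply_right, fromBlocks_apply₁₁, fromBlocks_apply₁₂, fromBlocks_apply₂₁,
        fromBlocks_apply₂₂, of_apply] <;> rfl
  rw [← det_submatrix_equiv_self finSumFinEquiv, hblocks, det_fromBlocks₁₁ A, det_fin_one,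
    invOf_eq_nonsing_inv]
  congr 1
  simp only [sub_apply, mul_apply, of_apply, dotProduct, mulVec, Finset.sum_mul, Finset.mul_sum]
  rw [Finset.sum_comm]
  exact congrArg _ (Finset.sum_congr rfl fun _ _ => Finset.sum_congr rfl fun _ _ => by ring)

end Matrix

section KernelForm

variable {X : Type*} {k : X → X → ℝ} {ι κ : Type*} [Fintype ι] [Fintype κ]

/-- The pre-RKHS inner product `⟨∑ᵢ aᵢ k(zᵢ, ·), ∑ⱼ bⱼ k(z'ⱼ, ·)⟩_k`. -/
def kernelForm (k : X → X → ℝ) (z : ι → X) (a : ι → ℝ) (z' : κ → X) (b : κ → ℝ) : ℝ :=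
  ∑ i, ∑ j, a i * b j * k (z i) (z' j)

def IsPosSemidefKernel (k : X → X → ℝ) : Prop :=
  ∀ (n : ℕ) (xv : Fin n → X) (c : Fin n → ℝ), 0 ≤ kernelForm k xv c xv c

theorem kernelForm_self_nonneg (hpsd : IsPosSemidefKernel k) (z : ι → X) (a : ι → ℝ) :
    0 ≤ kernelForm k z a z a := by
  let e := (Fintype.equivFin ι).symm
  convert hpsd _ (z ∘ e) (a ∘ e) using 1
  exact Fintype.sum_equiv e.symm _ _ fun i => Fintype.sum_equiv e.symm _ _ fun j => by simp

theorem kernelForm_comm (hsym : ∀ x y : X, k x y = k y x)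
    (z : ι → X) (a : ι → ℝ) (z' : κ → X) (b : κ → ℝ) :
    kernelForm k z a z' b = kernelForm k z' b z a := by
  rw [kernelForm, kernelForm, Finset.sum_comm]
  refine Finset.sum_congr rfl fun j _ => Finset.sum_congr rfl fun i _ => ?_
  rw [hsym]; ring

theorem kernelForm_sq_le (hsym : ∀ x y : X, k x y = k y x) (hpsd : IsPosSemidefKernel k)
    (z : ι → X) (a : ι → ℝ) (z' : κ → X) (b : κ → ℝ) :
    kernelForm k z a z' b ^ 2 ≤ kernelForm k z a z a * kernelForm k z' b z' b := by
  classical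
  let Z := Sum.elim z z'
  have hΦ (u v : ι ⊕ κ → ℝ) : (gram k Z).toBilin' u v = kernelForm k Z u Z v := by
    simp only [Matrix.toBilin'_apply, kernelForm, _root_.gram]
    exact Finset.sum_congr rfl fun _ _ => Finset.sum_congr rfl fun _ _ => by ring
  have hcs := (gram k Z).toBilin'.apply_mul_apply_le_of_forall_zero_le
    (fun u => (hΦ u u).symm ▸ kernelForm_self_nonneg hpsd Z u) (Sum.elim a 0) (Sum.elim 0 b)
  have hcomm := kernelForm_comm hsym z a z' b
  simp only [hΦ, kernelForm, Fintype.sum_sum_type, Z, Sum.elim_inl, Sum.elim_inr, Pi.zero_apply,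
    zero_mul, mul_zero, Finset.sum_const_zero, add_zero, zero_add] at hcs hcomm ⊢
  rwa [← hcomm, ← sq] at hcs

theorem kernelForm_eq_sum_mul {f : X → ℝ} {c : ι → ℝ} {xv : ι → X}
    (hf : ∀ y, f y = ∑ i, c i * k (xv i) y) (z' : κ → X) (b : κ → ℝ) :
    kernelForm k xv c z' b = ∑ j, b j * f (z' j) := by
  simp only [kernelForm, hf, Finset.mul_sum]
  rw [Finset.sum_comm]
  exact Finset.sum_congr rfl fun _ _ => Finset.sum_congr rfl fun _ _ => by ring

end KernelForm

section Posterior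

variable {X : Type*} {k : X → X → ℝ} {ι : Type*} [Fintype ι]

theorem gram_transpose (hsym : ∀ x y : X, k x y = k y x) (xs : ι → X) :
    (gram k xs)ᵀ = gram k xs := by
  ext i j
  exact hsym (xs j) (xs i)

theorem gram_posSemidef (hsym : ∀ x y : X, k x y = k y x) (hpsd : IsPosSemidefKernel k)
    (xs : ι → X) : (gram k xs).PosSemidef := by
  refine .of_dotProduct_mulVec_nonneg ?_ fun v => ?_
  · rw [IsHermitian, conjTranspose_eq_transpose_of_trivial, gram_transpose hsym]
  · refine (kernelForm_self_nonneg hpsd xs v).trans_eq ?_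
    simp only [star_trivial, dotProduct, mulVec, _root_.gram, kernelForm, Finset.mul_sum]
    exact Finset.sum_congr rfl fun _ _ => Finset.sum_congr rfl fun _ _ => by ring

/-- `x₁, …, x_t, x` with coefficients `-w₁, …, -w_t, 1` represent `k(x, ·) - ∑ wᵢ k(xᵢ, ·)`;
when `K w = k_t(x)` this function vanishes at every `xᵢ`, so its squared norm is its value
at `x`. -/
theorem kernelForm_residual (hsym : ∀ x y : X, k x y = k y x) (xs : ι → X) (x : X)
    {w : ι → ℝ} (hw : gram k xs *ᵥ w = kvec k xs x) :
    kernelForm k (Option.elim' x xs) (Option.elim' 1 (-w))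
      (Option.elim' x xs) (Option.elim' 1 (-w)) = k x x - kvec k xs x ⬝ᵥ w := by
  set r : X → ℝ := fun y => ∑ o, Option.elim' 1 (-w) o * k (Option.elim' x xs o) y
  have hr (y : X) : r y = k x y - ∑ i, w i * k (xs i) y := by
    simp only [r, Fintype.sum_option, Option.elim'_none, Option.elim'_some, Pi.neg_apply, neg_mul,
      one_mul, Finset.sum_neg_distrib, sub_eq_add_neg]
  have hr_data (j : ι) : r (xs j) = 0 := by
    rw [hr, sub_eq_zero, hsym, show k (xs j) x = _ from (congrFun hw j).symm]
    exact Finset.sum_congr rfl fun i _ => by rw [hsym, mul_comm]; rfl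
  rw [kernelForm_eq_sum_mul (f := r) fun _ => rfl, Fintype.sum_option]
  simp only [Option.elim'_none, Option.elim'_some, hr_data, Finset.sum_const_zero,
    add_zero, one_mul, hr, dotProduct, kvec, mul_comm, zero_mul]

variable [DecidableEq ι]

def postVarInv (k : X → X → ℝ) (xs : ι → X) (x : X) : ℝ :=
  k x x - kvec k xs x ⬝ᵥ ((gram k xs)⁻¹ *ᵥ kvec k xs x)

theorem gram_mulVec_inv_mulVec {xs : ι → X} (hK : IsUnit (gram k xs).det) (v : ι → ℝ) :
    gram k xs *ᵥ ((gram k xs)⁻¹ *ᵥ v) = v := by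
  rw [mulVec_mulVec, mul_nonsing_inv _ hK, one_mulVec]

theorem postVarInv_nonneg (hsym : ∀ x y : X, k x y = k y x) (hpsd : IsPosSemidefKernel k)
    {xs : ι → X} (hK : IsUnit (gram k xs).det) (x : X) : 0 ≤ postVarInv k xs x :=
  (kernelForm_self_nonneg hpsd _ _).trans_eq
    (kernelForm_residual hsym xs x (gram_mulVec_inv_mulVec hK _))

theorem postMean_eq_dotProduct (hsym : ∀ x y : X, k x y = k y x) (xs : ι → X) (f : X → ℝ)
    (x : X) : postMean k xs f x = ((gram k xs)⁻¹ *ᵥ kvec k xs x) ⬝ᵥ fun i => f (xs i) := by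
  rw [postMean, dotProduct_mulVec, ← mulVec_transpose, transpose_nonsing_inv,
    gram_transpose hsym]

/-- Cauchy–Schwarz between `f` and the residual of `kernelForm_residual`, whose inner product
with `f` is `f(x) - μ(x)`. -/
theorem abs_sub_postMean_le (hsym : ∀ x y : X, k x y = k y x) (hpsd : IsPosSemidefKernel k)
    {xs : ι → X} (hK : IsUnit (gram k xs).det) {κ : Type*} [Fintype κ] {f : X → ℝ}
    {c : κ → ℝ} {xv : κ → X} (hf : ∀ y, f y = ∑ i, c i * k (xv i) y) (x : X) :
    |f x - postMean k xs f x| ≤ √(kernelForm k xv c xv c) * postStdInv k xs x := by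
  set w := (gram k xs)⁻¹ *ᵥ kvec k xs x
  have hcross : kernelForm k xv c (Option.elim' x xs) (Option.elim' 1 (-w)) =
      f x - postMean k xs f x := by
    rw [kernelForm_eq_sum_mul hf, Fintype.sum_option, postMean_eq_dotProduct hsym]
    simp only [Option.elim'_none, Option.elim'_some, Pi.neg_apply, one_mul, neg_mul,
      Finset.sum_neg_distrib, dotProduct, w, sub_eq_add_neg]
  have hcs := kernelForm_sq_le hsym hpsd xv c (Option.elim' x xs) (Option.elim' 1 (-w))
  rw [hcross, kernelForm_residual hsym xs x (gram_mulVec_inv_mulVec hK _)] at hcs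
  rw [postStdInv, ← Real.sqrt_mul (kernelForm_self_nonneg hpsd xv c)]
  exact Real.abs_le_sqrt hcs

end Posterior

section InformationGain

variable {X : Type*} {k : X → X → ℝ}

theorem isUnit_det_gram_add_smul_one (hsym : ∀ x y : X, k x y = k y x)
    (hpsd : IsPosSemidefKernel k) {ι : Type*} [Fintype ι] [DecidableEq ι] (xs : ι → X)
    {l : ℝ} (hl : l ≠ 0) : IsUnit (gram k xs + l ^ 2 • 1).det :=
  (isUnit_iff_isUnit_det _).mp
    (PosDef.posSemidef_add (gram_posSemidef hsym hpsd xs) (PosDef.one.smul (by positivity))).isUnit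

theorem postVarInv_le_postVar (hsym : ∀ x y : X, k x y = k y x) (hpsd : IsPosSemidefKernel k)
    {ι : Type*} [Fintype ι] [DecidableEq ι] {xs : ι → X} (hK : IsUnit (gram k xs).det)
    {l : ℝ} (hl : l ≠ 0) (x : X) : postVarInv k xs x ≤ postVar k xs l x := by
  have := dotProduct_inv_mulVec_le_of_posSemidef_sub (gram_posSemidef hsym hpsd xs)
    (by rw [add_sub_cancel_left]; exact PosSemidef.one.smul (sq_nonneg l)) hK
    (isUnit_det_gram_add_smul_one hsym hpsd xs hl) (kvec k xs x)
  rw [postVarInv, postVar]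
  linarith

theorem det_gram_add_smul_one_prefN_succ (hsym : ∀ x y : X, k x y = k y x)
    (hpsd : IsPosSemidefKernel k) (xseq : ℕ → X) {l : ℝ} (hl : l ≠ 0) (t : ℕ) :
    (gram k (prefN xseq (t + 1)) + l ^ 2 • 1).det =
      (gram k (prefN xseq t) + l ^ 2 • 1).det *
        (l ^ 2 + postVar k (prefN xseq t) l (xseq t)) := by
  set M := gram k (prefN xseq (t + 1)) + l ^ 2 • 1
  have hsub : M.submatrix Fin.castSucc Fin.castSucc = gram k (prefN xseq t) + l ^ 2 • 1 := by
    ext i j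
    simp [M, _root_.gram, prefN, one_apply]
  have hrow : (fun j => M (Fin.last t) j.castSucc) = kvec k (prefN xseq t) (xseq t) := by
    ext j
    simp [M, _root_.gram, prefN, kvec, one_apply, hsym, (Fin.castSucc_lt_last j).ne']
  have hcol : (fun i => M i.castSucc (Fin.last t)) = kvec k (prefN xseq t) (xseq t) := by
    ext i
    simp [M, _root_.gram, prefN, kvec, one_apply, (Fin.castSucc_lt_last i).ne]
  rw [det_succ_eq_det_mul_schur M (hsub ▸ isUnit_det_gram_add_smul_one hsym hpsd _ hl), hsub,
    hrow, hcol, postVar]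
  congr 1
  simp only [M, Matrix.add_apply, Matrix.smul_apply, one_apply_eq, smul_eq_mul, mul_one,
    _root_.gram, prefN, Fin.val_last]
  ring

theorem det_one_add_smul_gram_prefN (hsym : ∀ x y : X, k x y = k y x)
    (hpsd : IsPosSemidefKernel k) (xseq : ℕ → X) {l : ℝ} (hl : l ≠ 0) (T : ℕ) :
    (1 + (l ^ 2)⁻¹ • gram k (prefN xseq T)).det =
      ∏ t ∈ Finset.range T, (1 + postVar k (prefN xseq t) l (xseq t) / l ^ 2) := by
  have hl2 : l ^ 2 ≠ 0 := pow_ne_zero 2 hl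
  have hprod : (gram k (prefN xseq T) + l ^ 2 • 1).det =
      ∏ t ∈ Finset.range T, (l ^ 2 + postVar k (prefN xseq t) l (xseq t)) := by
    induction T with
    | zero => simp
    | succ T ih =>
      rw [det_gram_add_smul_one_prefN_succ hsym hpsd xseq hl, ih, Finset.prod_range_succ]
  rw [show 1 + (l ^ 2)⁻¹ • gram k (prefN xseq T) = (l ^ 2)⁻¹ • (gram k (prefN xseq T) + l ^ 2 • 1)
      by rw [smul_add, smul_smul, inv_mul_cancel₀ hl2, one_smul, add_comm],
    det_smul, hprod, Fintype.card_fin]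
  nth_rw 1 [← Finset.card_range T]
  rw [Finset.pow_card_mul_prod]
  exact Finset.prod_congr rfl fun t _ => by field_simp

/-- The information gain of the queries is `∑ₜ ½ log(1 + σ²_{λ²}(xₜ; X_{t-1})/λ²)`; if it is
at most `T/6`, some summand is at most `1/6 < ½ log 2`. -/
theorem exists_postStdInv_le_of_mig_le (hsym : ∀ x y : X, k x y = k y x)
    (hpsd : IsPosSemidefKernel k) (xseq : ℕ → X) (hK : ∀ t, IsUnit (gram k (prefN xseq t)).det)
    {l : ℝ} (hl : 0 < l) {T : ℕ} (hT : 0 < T) (hmig : mig k T l ≤ ENNReal.ofReal (T / 6)) :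
    ∃ t < T, postStdInv k (prefN xseq t) (xseq t) ≤ l := by
  set s := fun t => postVar k (prefN xseq t) l (xseq t)
  have hs (t : ℕ) : postVarInv k (prefN xseq t) (xseq t) ≤ s t :=
    postVarInv_le_postVar hsym hpsd (hK t) hl.ne' _
  have hs0 (t : ℕ) : 0 ≤ s t / l ^ 2 :=
    div_nonneg ((postVarInv_nonneg hsym hpsd (hK t) _).trans (hs t)) (sq_nonneg l)
  have hgain : ∑ t ∈ Finset.range T, Real.log (1 + s t / l ^ 2) ≤ ∑ t ∈ Finset.range T, 1 / 3 := by
    have h := (le_iSup (fun xs : Fin T → X => ENNReal.ofReal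
      ((1 / 2) * Real.log ((1 + (l ^ 2)⁻¹ • gram k xs).det))) (prefN xseq T)).trans hmig
    rw [ENNReal.ofReal_le_ofReal_iff (by positivity), det_one_add_smul_gram_prefN hsym hpsd xseq
      hl.ne', Real.log_prod fun t _ => (add_pos_of_pos_of_nonneg one_pos (hs0 t)).ne'] at h
    rw [Finset.sum_const, Finset.card_range, nsmul_eq_mul]
    linarith
  obtain ⟨t, ht, hlog⟩ := Finset.exists_le_of_sum_le (Finset.nonempty_range_iff.2 hT.ne') hgain
  refine ⟨t, Finset.mem_range.1 ht, (Real.sqrt_le_left hl.le).2 ((hs t).trans ?_)⟩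
  by_contra! h
  have : Real.log 2 < Real.log (1 + s t / l ^ 2) :=
    Real.log_lt_log two_pos (by linarith [(one_lt_div (by positivity)).2 h])
  linarith [Real.log_two_gt_d9]

end InformationGain

theorem sub_le_two_mul_of_ucb {X : Type*} {f μ σ : X → ℝ} {B : ℝ}
    (hconf : ∀ x, |f x - μ x| ≤ B * σ x) {y : X} (hy : ∀ x, μ x + B * σ x ≤ μ y + B * σ y)
    (x : X) : f x - f y ≤ 2 * B * σ y := by
  linarith [abs_le.1 (hconf x), abs_le.1 (hconf y), hy x]

theorem gp_ucb_simple_regret_le {X : Type*} {k : X → X → ℝ} (hsym : ∀ x y : X, k x y = k y x)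
    (hpsd : IsPosSemidefKernel k) {xseq : ℕ → X} (hK : ∀ t, IsUnit (gram k (prefN xseq t)).det)
    {κ : Type*} [Fintype κ] {f : X → ℝ} {c : κ → ℝ} {xv : κ → X}
    (hf : ∀ y, f y = ∑ i, c i * k (xv i) y) {B : ℝ} (hnorm : √(kernelForm k xv c xv c) ≤ B)
    (hucb : ∀ (t : ℕ) (x : X),
      postMean k (prefN xseq t) f x + B * postStdInv k (prefN xseq t) x ≤
        postMean k (prefN xseq t) f (xseq t) + B * postStdInv k (prefN xseq t) (xseq t))
    (xstar : X) {T t : ℕ} (ht : t < T) :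
    f xstar - sSup (Set.range fun s : Fin T => f (xseq s)) ≤
      2 * B * postStdInv k (prefN xseq t) (xseq t) := by
  have hconf (x : X) :
      |f x - postMean k (prefN xseq t) f x| ≤ B * postStdInv k (prefN xseq t) x :=
    (abs_sub_postMean_le hsym hpsd (hK t) hf x).trans
      (mul_le_mul_of_nonneg_right hnorm (Real.sqrt_nonneg _))
  calc f xstar - sSup (Set.range fun s : Fin T => f (xseq s))
      ≤ f xstar - f (xseq t) := by
        gcongr
        exact le_csSup (Set.finite_range _).bddAbove ⟨⟨t, ht⟩, rfl⟩
    _ ≤ 2 * B * postStdInv k (prefN xseq t) (xseq t) :=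
        sub_le_two_mul_of_ucb hconf (hucb t) xstar

open Real in
/-- With `λ² = C̃ t^{-β} (ln t)^β` and `β = 2ν/d`, the Matérn bound on `γ_t(λ²)` is at most `t/6`:
`λ² ≥ t^{-β}` bounds `ln(t/λ²) ≤ (1 + β) ln t`, after which the powers of `t` and `ln t`
cancel exactly. -/
theorem matern_gain_le {C ν d Ctil t : ℝ} (hC : 0 < C) (hν : 0 < ν) (hd : 0 < d)
    (hCtil1 : 1 ≤ Ctil)
    (hCtil : (2 + 2 * ν / d) ^ (2 * ν / d) * (6 * C) ^ (1 + 2 * ν / d) ≤ Ctil)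
    (ht0 : 0 < t) (ht : 1 ≤ log t) (hlam : Ctil * t ^ (-(2 * ν / d)) * log t ^ (2 * ν / d) < 1) :
    C * (t / (Ctil * t ^ (-(2 * ν / d)) * log t ^ (2 * ν / d))) ^ (d / (2 * ν + d)) *
      log (t / (Ctil * t ^ (-(2 * ν / d)) * log t ^ (2 * ν / d))) ^ (2 * ν / (2 * ν + d)) ≤
      t / 6 := by
  set β := 2 * ν / d
  set L := log t
  set lam2 := Ctil * t ^ (-β) * L ^ β
  set p := d / (2 * ν + d)
  set q := 2 * ν / (2 * ν + d)
  have hβ : 0 < β := by positivity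
  have hβp : β * p = q := by simp only [β, p, q]; field_simp
  have hpq : p + q = 1 := by simp only [p, q]; field_simp; ring
  have hβ1p : (1 + β) * p = 1 := by rw [add_mul, one_mul, hβp, hpq]
  have hlam2 : 0 < lam2 := by positivity
  have hlam2_ge : t ^ (-β) ≤ lam2 := by
    have : 1 ≤ Ctil * L ^ β := one_le_mul_of_one_le_of_one_le hCtil1 (one_le_rpow ht hβ.le)
    calc t ^ (-β) ≤ t ^ (-β) * (Ctil * L ^ β) := le_mul_of_one_le_right (by positivity) this
      _ = lam2 := by ring
  have hlog : log (t / lam2) ≤ (2 + β) * L := by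
    have hle : t / lam2 ≤ t ^ (1 + β) := by
      calc t / lam2 ≤ t / t ^ (-β) := div_le_div_of_nonneg_left ht0.le (by positivity) hlam2_ge
        _ = t ^ (1 + β) := by rw [rpow_neg ht0.le, div_inv_eq_mul, rpow_add ht0, rpow_one]
    calc log (t / lam2) ≤ log (t ^ (1 + β)) := log_le_log (by positivity) hle
      _ ≤ (2 + β) * L := by rw [log_rpow ht0]; nlinarith
  have hlog0 : 0 ≤ log (t / lam2) := by
    have : 1 < t := by
      by_contra! h
      linarith [log_nonpos ht0.le h]
    exact log_nonneg ((one_le_div hlam2).2 (by linarith))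
  have hpow : (t / lam2) ^ p * L ^ q = t / Ctil ^ p := by
    have hL : 0 < L := by linarith
    have hlam2p : lam2 ^ p = Ctil ^ p * (t ^ q)⁻¹ * L ^ q := by
      rw [mul_rpow (by positivity) (by positivity), mul_rpow (by positivity) (by positivity),
        ← rpow_mul ht0.le, ← rpow_mul hL.le, neg_mul, hβp, rpow_neg ht0.le]
    have htpq : t ^ p * t ^ q = t := by rw [← rpow_add ht0, hpq, rpow_one]
    rw [div_rpow ht0.le hlam2.le, hlam2p]
    field_simp
    exact htpq
  have hCp : 6 * C * (2 + β) ^ q ≤ Ctil ^ p := by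
    calc 6 * C * (2 + β) ^ q = ((2 + β) ^ β * (6 * C) ^ (1 + β)) ^ p := by
          rw [mul_rpow (by positivity) (by positivity), ← rpow_mul (by positivity),
            ← rpow_mul (by positivity), hβp, hβ1p, rpow_one, mul_comm]
      _ ≤ Ctil ^ p := rpow_le_rpow (by positivity) hCtil (by positivity)
  calc C * (t / lam2) ^ p * log (t / lam2) ^ q
      ≤ C * (t / lam2) ^ p * ((2 + β) * L) ^ q := by gcongr
    _ = C * (2 + β) ^ q * t / Ctil ^ p := by
      rw [mul_rpow (by positivity) (by linarith), ← mul_assoc, mul_assoc C,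
        mul_comm _ ((2 + β) ^ q), ← mul_assoc, mul_assoc, hpow, mul_div_assoc]
    _ ≤ t / 6 := by
      rw [div_le_div_iff₀ (by positivity) (by norm_num)]
      nlinarith [mul_le_mul_of_nonneg_left hCp ht0.le]

theorem sqrt_mul_rpow_neg_mul_rpow {a x y s : ℝ} (ha : 0 ≤ a) (hx : 0 ≤ x) (hy : 0 ≤ y) :
    √(a * x ^ (-(2 * s)) * y ^ (2 * s)) = √a * x ^ (-s) * y ^ s := by
  rw [Real.sqrt_mul (by positivity), Real.sqrt_mul ha, Real.sqrt_eq_rpow (x ^ _),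
    Real.sqrt_eq_rpow (y ^ _), ← Real.rpow_mul hx, ← Real.rpow_mul hy]
  ring_nf

theorem gp_ucb_simple_regret_matern_general
{X : Type*} (k : X → X → ℝ)
    (hsym : ∀ x y : X, k x y = k y x)
    (hpsd : ∀ (n : ℕ) (xv : Fin n → X) (c : Fin n → ℝ),
      0 ≤ ∑ i, ∑ j, c i * c j * k (xv i) (xv j))
    (hk1 : ∀ x : X, k x x ≤ 1)
    (CMat lamBar : ℝ) (hCMat : 0 < CMat) (hlamBar : 0 < lamBar)
    (T0 : ℕ) (d : ℕ) (hd : 1 ≤ d) (ν : ℝ) (hν : 0 < ν)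
    (hgain : ∀ lam : ℝ, 0 < lam → lam ≤ lamBar → ∀ t : ℕ, T0 ≤ t →
      mig k t lam ≤ ENNReal.ofReal
        (CMat * ((t : ℝ) / lam ^ 2) ^ ((d : ℝ) / (2 * ν + (d : ℝ))) *
          Real.log ((t : ℝ) / lam ^ 2) ^ (2 * ν / (2 * ν + (d : ℝ)))))
    (Ctil : ℝ) (hCtil : Ctil = max 1
      ((2 + 2 * ν / (d : ℝ)) ^ (2 * ν / (d : ℝ)) * (6 * CMat) ^ (1 + 2 * ν / (d : ℝ))))
    (Tlam : ℕ) (hTlam : ∀ t : ℕ, Tlam ≤ t →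
      Ctil * (t : ℝ) ^ (-(2 * ν / (d : ℝ))) * Real.log (t : ℝ) ^ (2 * ν / (d : ℝ)) ≤ lamBar ^ 2)
    (TMat : ℕ) (hTMat : TMat = max 4 (max T0 Tlam))
(f : X → ℝ) (n : ℕ) (c : Fin n → ℝ) (xv : Fin n → X)
    (hf : ∀ x : X, f x = ∑ i, c i * k (xv i) x)
    (B : ℝ)
    (hnorm : Real.sqrt (∑ i, ∑ j, c i * c j * k (xv i) (xv j)) ≤ B)
    (xstar : X)
    (xseq : ℕ → X)
    (hinv : ∀ t : ℕ, 1 ≤ t → IsUnit (gram k (prefN xseq t)).det)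
    (hucb : ∀ (t : ℕ) (x : X),
      postMean k (prefN xseq t) f x + B * postStdInv k (prefN xseq t) x ≤
        postMean k (prefN xseq t) f (xseq t) + B * postStdInv k (prefN xseq t) (xseq t)) :
    ∀ T : ℕ, TMat ≤ T →
      f xstar - sSup (Set.range fun t : Fin T => f (xseq t.1)) ≤
        2 * B * Real.sqrt Ctil * (T : ℝ) ^ (-(ν / (d : ℝ))) *
          Real.log (T : ℝ) ^ (ν / (d : ℝ)) := by
  intro T hT
  obtain ⟨hT4, hT0T, hTlamT⟩ : 4 ≤ T ∧ T0 ≤ T ∧ Tlam ≤ T := by omega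
  have hT4' : (4 : ℝ) ≤ T := by exact_mod_cast hT4
  have hT0 : (0 : ℝ) < T := by linarith
  have hlogT : 1 ≤ Real.log T :=
    (Real.le_log_iff_exp_le hT0).2 (by linarith [Real.exp_one_lt_three])
  have hCtil1 : 1 ≤ Ctil := hCtil ▸ le_max_left _ _
  set lam2 := Ctil * (T : ℝ) ^ (-(2 * ν / d)) * Real.log T ^ (2 * ν / d) with hlam2_def
  have hlam2 : 0 < lam2 := mul_pos (mul_pos (by linarith) (Real.rpow_pos_of_pos hT0 _))
    (Real.rpow_pos_of_pos (by linarith) _)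
  have hlam : 0 < √lam2 := Real.sqrt_pos.2 hlam2
  have hK (t : ℕ) : IsUnit (gram k (prefN xseq t)).det := by
    rcases t.eq_zero_or_pos with rfl | ht
    · simp
    · exact hinv t ht
  obtain ⟨t, htT, hσ⟩ : ∃ t < T, postStdInv k (prefN xseq t) (xseq t) ≤ √lam2 := by
    rcases le_or_gt 1 lam2 with h1 | h1
    · refine ⟨0, by omega, ?_⟩
      simpa [postStdInv, dotProduct] using Real.sqrt_le_sqrt ((hk1 (xseq 0)).trans h1)
    · refine exists_postStdInv_le_of_mig_le hsym hpsd xseq hK hlam (by omega)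
        ((hgain _ hlam ?_ T hT0T).trans (ENNReal.ofReal_le_ofReal ?_))
      · exact (Real.sqrt_le_sqrt (hTlam T hTlamT)).trans_eq (Real.sqrt_sq hlamBar.le)
      · rw [Real.sq_sqrt hlam2.le]
        exact matern_gain_le hCMat hν (by positivity) hCtil1 (hCtil ▸ le_max_right _ _) hT0
          hlogT h1
  calc f xstar - sSup (Set.range fun t : Fin T => f (xseq t.1))
      ≤ 2 * B * postStdInv k (prefN xseq t) (xseq t) :=
        gp_ucb_simple_regret_le hsym hpsd hK hf hnorm hucb xstar htT
    _ ≤ 2 * B * √lam2 := by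
        have hB : 0 ≤ B := (Real.sqrt_nonneg _).trans hnorm
        gcongr
    _ = _ := by
        rw [hlam2_def, mul_div_assoc, sqrt_mul_rpow_neg_mul_rpow (by positivity) hT0.le
          (by positivity)]
        ring

/-- Simple regret for GP-UCB under a Matérn-type information-gain bound. -/
theorem gp_ucb_simple_regret_matern
{X : Type*} [Nonempty X] (k : X → X → ℝ)
    (hsym : ∀ x y : X, k x y = k y x)
    (hpsd : ∀ (n : ℕ) (xv : Fin n → X) (c : Fin n → ℝ),
      0 ≤ ∑ i, ∑ j, c i * c j * k (xv i) (xv j))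
    (hk1 : ∀ x : X, k x x ≤ 1)
    (CMat lamBar : ℝ) (hCMat : 0 < CMat) (hlamBar : 0 < lamBar)
    (T0 : ℕ) (hT0 : 2 ≤ T0) (d : ℕ) (hd : 1 ≤ d) (ν : ℝ) (hν : 0 < ν)
    (hgain : ∀ lam : ℝ, 0 < lam → lam ≤ lamBar → ∀ t : ℕ, T0 ≤ t →
      mig k t lam ≤ ENNReal.ofReal
        (CMat * ((t : ℝ) / lam ^ 2) ^ ((d : ℝ) / (2 * ν + (d : ℝ))) *
          Real.log ((t : ℝ) / lam ^ 2) ^ (2 * ν / (2 * ν + (d : ℝ)))))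
    (Ctil : ℝ) (hCtil : Ctil = max 1
      ((2 + 2 * ν / (d : ℝ)) ^ (2 * ν / (d : ℝ)) * (6 * CMat) ^ (1 + 2 * ν / (d : ℝ))))
    (Tlam : ℕ) (hTlam : ∀ t : ℕ, Tlam ≤ t →
      Ctil * (t : ℝ) ^ (-(2 * ν / (d : ℝ))) * Real.log (t : ℝ) ^ (2 * ν / (d : ℝ)) ≤ lamBar ^ 2)
    (TMat : ℕ) (hTMat : TMat = max 4 (max T0 Tlam))
(f : X → ℝ) (n : ℕ) (c : Fin n → ℝ) (xv : Fin n → X)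
    (hf : ∀ x : X, f x = ∑ i, c i * k (xv i) x)
    (B : ℝ) (hB : 0 < B)
    (hnorm : Real.sqrt (∑ i, ∑ j, c i * c j * k (xv i) (xv j)) ≤ B)
    (xstar : X) (hstar : ∀ x : X, f x ≤ f xstar)
    (xseq : ℕ → X)
    (hinv : ∀ t : ℕ, 1 ≤ t → IsUnit (gram k (prefN xseq t)).det)
    (hucb : ∀ (t : ℕ) (x : X),
      postMean k (prefN xseq t) f x + B * postStdInv k (prefN xseq t) x ≤
        postMean k (prefN xseq t) f (xseq t) + B * postStdInv k (prefN xseq t) (xseq t)) :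
    ∀ T : ℕ, TMat ≤ T →
      f xstar - sSup (Set.range fun t : Fin T => f (xseq t.1)) ≤
        2 * B * Real.sqrt Ctil * (T : ℝ) ^ (-(ν / (d : ℝ))) *
          Real.log (T : ℝ) ^ (ν / (d : ℝ)) :=
  gp_ucb_simple_regret_matern_general k hsym hpsd hk1 CMat lamBar hCMat hlamBar T0 d hd ν hν hgain
    Ctil hCtil Tlam hTlam TMat hTMat f n c xv hf B hnorm xstar xseq hinv hucb
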